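/- arXiv:1409.1183 — 2 statements merged into one kernel-verified Lean document; each statement's English description precedes it below -/
import Mathlib

section
/- Let Φ be an irreducible root system and β ∈ Φ. Then the following are equivalent: (i) for every α ∈ Φ, the set (α + ℤβ) ∩ Φ contains no string of three consecutive elements, i.e., there is no α ∈ Φ with α + β ∈ Φ and α + 2β ∈ Φ; (ii) β is a long root. -/
/-!  Common setup: a finite reduced crystallographic root system `Φ` in a Euclidean
space `E`, positive systems, reflections, the Weyl group, inversion sets and length. -/

noncomputable section

namespace CoisoRS

open RealInnerProductSpace

variable {E : Type*} [NormedAddCommGroup E] [InnerProductSpace ℝ E]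

/-- `Φ` is a finite reduced crystallographic root system in the Euclidean space `E`. -/
structure IsRootSystem (Φ : Set E) : Prop where
  finite : Φ.Finite
  nonempty : Φ.Nonempty
  ne_zero : ∀ α ∈ Φ, α ≠ 0
  reduced : ∀ α ∈ Φ, ∀ c : ℝ, c • α ∈ Φ → c = 1 ∨ c = -1
  crystallographic : ∀ α ∈ Φ, ∀ β ∈ Φ, ∃ n : ℤ, 2 * ⟪α, β⟫ / ⟪β, β⟫ = (n : ℝ)
  reflection_mem : ∀ α ∈ Φ, ∀ β ∈ Φ, β - (2 * ⟪β, α⟫ / ⟪α, α⟫) • α ∈ Φ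

/-- The root system `Φ` is irreducible: it does not split as a union of two nonempty
mutually orthogonal subsets. -/
def IsIrreducibleRS (Φ : Set E) : Prop :=
  ¬ ∃ Φ₁ Φ₂ : Set E, Φ₁.Nonempty ∧ Φ₂.Nonempty ∧ Φ = Φ₁ ∪ Φ₂ ∧
      ∀ α ∈ Φ₁, ∀ β ∈ Φ₂, ⟪α, β⟫ = 0

/-- `β` is a long root of `Φ`: `(γ,γ) ≤ (β,β)` for all `γ ∈ Φ`. -/
def IsLongRoot (Φ : Set E) (β : E) : Prop :=
  β ∈ Φ ∧ ∀ γ ∈ Φ, ⟪γ, γ⟫ ≤ ⟪β, β⟫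

/-- `P` is a system of positive roots of `Φ`. -/
structure IsPositiveSystem (Φ P : Set E) : Prop where
  subset : P ⊆ Φ
  mem_or_neg_mem : ∀ α ∈ Φ, α ∈ P ∨ -α ∈ P
  not_neg_mem : ∀ α ∈ P, -α ∉ P
  add_mem : ∀ α ∈ P, ∀ β ∈ P, α + β ∈ Φ → α + β ∈ P

/-- The reflection `s_β(x) = x − (2(x,β)/(β,β)) β` through (the hyperplane orthogonal
to) `β`. -/
def sRefl (β : E) (x : E) : E := x - (2 * ⟪x, β⟫ / ⟪β, β⟫) • β

/-- The set of reflections through the roots of `Φ`, as linear automorphisms of `E`. -/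
def reflections (Φ : Set E) : Set (E ≃ₗ[ℝ] E) :=
  {w | ∃ β ∈ Φ, ∀ x, w x = sRefl β x}

/-- The Weyl group `W` of `Φ`: the subgroup of `GL(E)` generated by the reflections
through the roots. -/
def weylGroup (Φ : Set E) : Subgroup (E ≃ₗ[ℝ] E) := Subgroup.closure (reflections Φ)

/-- The inversion set `Φ_u = {α ∈ Φ⁺ : u⁻¹(α) ∈ −Φ⁺}` of positive roots made negative
by `u⁻¹`. -/
def invSet (P : Set E) (u : E ≃ₗ[ℝ] E) : Set E := {α | α ∈ P ∧ -(u.symm α) ∈ P}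

/-- The length `ℓ(u) = |Φ_u|`. -/
def len (P : Set E) (u : E ≃ₗ[ℝ] E) : ℕ := (invSet P u).ncard

/-- `Φ_{s_β} = {α ∈ Φ⁺ : s_β(α) ∈ −Φ⁺}`. -/
def invSetRefl (P : Set E) (β : E) : Set E := {α | α ∈ P ∧ -(sRefl β α) ∈ P}

end CoisoRS

/-! The parallelogram law `|α|² + |α + 2β|² = 2|α + β|² + 2|β|²` shows that a string
`α, α + β, α + 2β` of roots forces `|α|²` or `|α + 2β|²` to exceed `|β|²`, so no such string
exists when `β` is long. Conversely, if some root is longer than `β`, irreducibility and the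
reflections produce a longer root `δ` with `(δ, β) < 0`; the Cartan integers of the pair then
give `2(δ, β)/(β, β) ≤ -2`, so `δ, δ + β, δ + 2β` is a string of roots. -/

namespace CoisoRS

open RealInnerProductSpace

variable {E : Type*} [NormedAddCommGroup E] [InnerProductSpace ℝ E]

theorem inner_sRefl_sRefl {a : E} (ha : ⟪a, a⟫ ≠ 0) (x y : E) :
    ⟪sRefl a x, sRefl a y⟫ = ⟪x, y⟫ := by
  simp only [sRefl, inner_sub_left, inner_sub_right, real_inner_smul_left,
    real_inner_smul_right, real_inner_comm a x, real_inner_comm a y]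
  field_simp
  ring

namespace IsRootSystem

variable {Φ : Set E} (hΦ : IsRootSystem Φ) {α β : E}
include hΦ

theorem inner_self_pos (hα : α ∈ Φ) : 0 < ⟪α, α⟫ :=
  real_inner_self_pos.mpr (hΦ.ne_zero α hα)

theorem sRefl_mem (hα : α ∈ Φ) (hβ : β ∈ Φ) : sRefl α β ∈ Φ :=
  hΦ.reflection_mem α hα β hβ

theorem sub_smul_mem (hα : α ∈ Φ) (hβ : β ∈ Φ) {k : ℝ} (hk : 2 * ⟪α, β⟫ = k * ⟪β, β⟫) :
    α - k • β ∈ Φ := by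
  have hk' : 2 * ⟪α, β⟫ / ⟪β, β⟫ = k := by
    rw [hk, mul_div_cancel_right₀ _ (hΦ.inner_self_pos hβ).ne']
  simpa only [sRefl, hk'] using hΦ.sRefl_mem hβ hα

theorem neg_mem (hα : α ∈ Φ) : -α ∈ Φ := by
  have h := hΦ.sub_smul_mem hα hα (k := 2) rfl
  rwa [two_smul, sub_add_cancel_left] at h

theorem exists_int_le_neg_one_of_inner_neg (hα : α ∈ Φ) (hβ : β ∈ Φ) (hneg : ⟪α, β⟫ < 0) :
    ∃ n : ℤ, n ≤ -1 ∧ 2 * ⟪α, β⟫ = n * ⟪β, β⟫ := by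
  obtain ⟨n, hn⟩ := hΦ.crystallographic α hα β hβ
  have hββ := hΦ.inner_self_pos hβ
  rw [div_eq_iff hββ.ne'] at hn
  have hn0 : n < 0 := by
    have : (n : ℝ) < 0 := by nlinarith
    exact_mod_cast this
  exact ⟨n, by omega, hn⟩

theorem add_mem_of_inner_neg (hα : α ∈ Φ) (hβ : β ∈ Φ) (hneg : ⟪α, β⟫ < 0)
    (hne : α + β ≠ 0) : α + β ∈ Φ := by
  obtain ⟨n, hn, hαβ⟩ := hΦ.exists_int_le_neg_one_of_inner_neg hα hβ hneg
  obtain ⟨m, hm, hβα⟩ :=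
    hΦ.exists_int_le_neg_one_of_inner_neg hβ hα (by rwa [real_inner_comm])
  rcases eq_or_lt_of_le hn with rfl | hn
  · simpa [sub_eq_add_neg] using hΦ.sub_smul_mem hα hβ hαβ
  rcases eq_or_lt_of_le hm with rfl | hm
  · simpa [sub_eq_add_neg, add_comm] using hΦ.sub_smul_mem hβ hα hβα
  -- Both Cartan integers are `≤ -2`, which would make `|α + β|² ≤ 0`.
  have hn2 : (n : ℝ) ≤ -2 := by exact_mod_cast (by omega : n ≤ -2)
  have hm2 : (m : ℝ) ≤ -2 := by exact_mod_cast (by omega : m ≤ -2)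
  rw [real_inner_comm] at hβα
  have hβ2 : 2 * ⟪α, β⟫ ≤ -2 * ⟪β, β⟫ := by
    rw [hαβ]; exact mul_le_mul_of_nonneg_right hn2 (hΦ.inner_self_pos hβ).le
  have hα2 : 2 * ⟪α, β⟫ ≤ -2 * ⟪α, α⟫ := by
    rw [hβα]; exact mul_le_mul_of_nonneg_right hm2 (hΦ.inner_self_pos hα).le
  have hpos := real_inner_self_pos.mpr hne
  rw [real_inner_add_add_self] at hpos
  linarith

theorem two_inner_le_neg_two_inner_self_of_lt (hα : α ∈ Φ) (hβ : β ∈ Φ)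
    (hneg : ⟪α, β⟫ < 0) (hlt : ⟪β, β⟫ < ⟪α, α⟫) : 2 * ⟪α, β⟫ ≤ -2 * ⟪β, β⟫ := by
  obtain ⟨n, -, hαβ⟩ := hΦ.exists_int_le_neg_one_of_inner_neg hα hβ hneg
  obtain ⟨m, hm, hβα⟩ :=
    hΦ.exists_int_le_neg_one_of_inner_neg hβ hα (by rwa [real_inner_comm])
  rw [real_inner_comm] at hβα
  have hββ := hΦ.inner_self_pos hβ
  have hm' : (m : ℝ) ≤ -1 := by exact_mod_cast hm
  have hn : (n : ℝ) < -1 := by nlinarith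
  have hn2 : (n : ℝ) ≤ -2 := by
    have : n < -1 := by exact_mod_cast hn
    exact_mod_cast (by omega : n ≤ -2)
  nlinarith

theorem add_two_smul_mem (hα : α ∈ Φ) (hβ : β ∈ Φ) (hne : α ≠ -β)
    (hle : 2 * ⟪α, β⟫ ≤ -2 * ⟪β, β⟫) : α + (2 : ℝ) • β ∈ Φ := by
  have hββ := hΦ.inner_self_pos hβ
  obtain ⟨n, -, hn⟩ := hΦ.exists_int_le_neg_one_of_inner_neg hα hβ (by linarith)
  have hn2 : n ≤ -2 := by
    have : (n : ℝ) ≤ -2 := by nlinarith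
    exact_mod_cast this
  rcases eq_or_lt_of_le hn2 with rfl | hn3
  · simpa [sub_eq_add_neg] using hΦ.sub_smul_mem hα hβ hn
  have hn3 : (n : ℝ) ≤ -3 := by exact_mod_cast (by omega : n ≤ -3)
  have hαβ : α + β ∈ Φ :=
    hΦ.add_mem_of_inner_neg hα hβ (by linarith) (fun h ↦ hne (eq_neg_of_add_eq_zero_left h))
  have hsum : α + β + β ≠ 0 := by
    intro h
    have hα2 : (-2 : ℝ) • β = α := by linear_combination (norm := module) -h
    rcases hΦ.reduced β hβ (-2) (hα2 ▸ hα) with h | h <;> norm_num at h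
  rw [two_smul, ← add_assoc]
  refine hΦ.add_mem_of_inner_neg hαβ hβ ?_ hsum
  rw [inner_add_left]
  nlinarith

end IsRootSystem

def RootLink (Φ : Set E) (x y : E) : Prop := x ∈ Φ ∧ ⟪x, y⟫ ≠ 0

theorem IsIrreducibleRS.reflTransGen_rootLink {Φ : Set E} (hirr : IsIrreducibleRS Φ)
    {γ β : E} (hγ : γ ∈ Φ) (hβ : β ∈ Φ) : Relation.ReflTransGen (RootLink Φ) γ β := by
  by_contra hγβ
  refine hirr ⟨{x | x ∈ Φ ∧ Relation.ReflTransGen (RootLink Φ) γ x},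
    {x | x ∈ Φ ∧ ¬ Relation.ReflTransGen (RootLink Φ) γ x}, ⟨γ, hγ, .refl⟩, ⟨β, hβ, hγβ⟩,
    Set.ext fun x ↦ by by_cases h : Relation.ReflTransGen (RootLink Φ) γ x <;> simp [h], ?_⟩
  rintro a ⟨ha, hγa⟩ b ⟨-, hγb⟩
  by_contra hab
  exact hγb (hγa.tail ⟨ha, hab⟩)

-- If `δ ⟂ b` for the next vertex `b` of the chain, reflecting `δ` in the current vertex `a`
-- keeps its length and makes it non-orthogonal to `b`.
theorem IsRootSystem.exists_inner_ne_zero_of_reflTransGen {Φ : Set E} (hΦ : IsRootSystem Φ)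
    {x β : E} (hx : Relation.ReflTransGen (RootLink Φ) x β) {δ : E} (hδ : δ ∈ Φ)
    (hδx : ⟪δ, x⟫ ≠ 0) : ∃ δ' ∈ Φ, ⟪δ', δ'⟫ = ⟪δ, δ⟫ ∧ ⟪δ', β⟫ ≠ 0 := by
  induction hx using Relation.ReflTransGen.head_induction_on generalizing δ with
  | refl => exact ⟨δ, hδ, rfl, hδx⟩
  | @head a b hab _ ih =>
    obtain ⟨ha, hab⟩ := hab
    by_cases hδb : ⟪δ, b⟫ = 0
    · have haa := (hΦ.inner_self_pos ha).ne'
      obtain ⟨δ', hδ', hlen, hδ'β⟩ := ih (hΦ.sRefl_mem ha hδ) (by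
        simp only [sRefl, inner_sub_left, real_inner_smul_left, hδb]
        simp [hδx, hab, hΦ.ne_zero a ha])
      exact ⟨δ', hδ', hlen.trans (inner_sRefl_sRefl haa δ δ), hδ'β⟩
    · exact ih hδ hδb

theorem IsRootSystem.exists_longer_inner_neg {Φ : Set E} (hΦ : IsRootSystem Φ)
    (hirr : IsIrreducibleRS Φ) {β γ : E} (hβ : β ∈ Φ) (hγ : γ ∈ Φ) (hlt : ⟪β, β⟫ < ⟪γ, γ⟫) :
    ∃ δ ∈ Φ, ⟪β, β⟫ < ⟪δ, δ⟫ ∧ ⟪δ, β⟫ < 0 := by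
  obtain ⟨δ, hδ, hlen, hδβ⟩ := hΦ.exists_inner_ne_zero_of_reflTransGen
    (hirr.reflTransGen_rootLink hγ hβ) hγ (hΦ.inner_self_pos hγ).ne'
  rw [← hlen] at hlt
  rcases hδβ.lt_or_gt with h | h
  · exact ⟨δ, hδ, hlt, h⟩
  · exact ⟨-δ, hΦ.neg_mem hδ, by rwa [inner_neg_neg], by rwa [inner_neg_left, neg_lt_zero]⟩

end CoisoRS

open CoisoRS RealInnerProductSpace in
/-- For `β` in an irreducible root system `Φ`, the following are
equivalent: (i) there is no `α ∈ Φ` with `α + β ∈ Φ` and `α + 2β ∈ Φ` (no root string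
of three consecutive elements in any `(α + ℤβ) ∩ Φ`); (ii) `β` is a long root. -/
theorem statement11 {E : Type*} [NormedAddCommGroup E] [InnerProductSpace ℝ E]
    (Φ : Set E) (hΦ : IsRootSystem Φ) (hirr : IsIrreducibleRS Φ)
    (β : E) (hβ : β ∈ Φ) :
    (¬ ∃ α ∈ Φ, α + β ∈ Φ ∧ α + (2 : ℝ) • β ∈ Φ) ↔ IsLongRoot Φ β := by
  constructor
  · intro hno
    refine ⟨hβ, fun γ hγ ↦ le_of_not_gt fun hlt ↦ hno ?_⟩
    obtain ⟨δ, hδ, hlong, hneg⟩ := hΦ.exists_longer_inner_neg hirr hβ hγ hlt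
    have hne : δ ≠ -β := by rintro rfl; simp at hlong
    exact ⟨δ, hδ,
      hΦ.add_mem_of_inner_neg hδ hβ hneg (fun h ↦ hne (eq_neg_of_add_eq_zero_left h)),
      hΦ.add_two_smul_mem hδ hβ hne (hΦ.two_inner_le_neg_two_inner_self_of_lt hδ hβ hneg hlong)⟩
  · rintro ⟨-, hlong⟩ ⟨α, hα, hαβ, hα2β⟩
    have hpar := parallelogram_law (𝕜 := ℝ) (x := α + β) (y := β)
    rw [add_assoc, ← two_smul ℝ, add_sub_cancel_right] at hpar
    linarith [hlong α hα, hlong _ hα2β, hΦ.inner_self_pos hαβ]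
end
end

section
/- Let β ∈ Φ⁺ be a long root. Then the map α ↦ β − α is a fixed-point-free involution of the set Φ_{s_β} ∖ {β}: for every α ∈ Φ_{s_β} with α ≠ β, one has β − α ∈ Φ_{s_β}, β − α ≠ β, and β − α ≠ α. -/
/-!  Common setup: a finite reduced crystallographic root system `Φ` in a Euclidean
space `E`, positive systems, reflections, the Weyl group, inversion sets and length. -/

noncomputable section

open CoisoRS RealInnerProductSpace in
/-- Let `β ∈ Φ⁺` be a long root.  Then `α ↦ β − α` is a
fixed-point-free involution of `Φ_{s_β} ∖ {β}`: for every `α ∈ Φ_{s_β}` with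
`α ≠ β`, one has `β − α ∈ Φ_{s_β}`, `β − α ≠ β` and `β − α ≠ α`. -/
theorem statement15 {E : Type*} [NormedAddCommGroup E] [InnerProductSpace ℝ E]
    (Φ P : Set E) (hΦ : IsRootSystem Φ) (hirr : IsIrreducibleRS Φ)
    (hP : IsPositiveSystem Φ P)
    (β : E) (hβP : β ∈ P) (hβ : IsLongRoot Φ β) :
    ∀ α ∈ invSetRefl P β, α ≠ β →
      β - α ∈ invSetRefl P β ∧ β - α ≠ β ∧ β - α ≠ α := by
  obtain ⟨hβΦ, hlong⟩ := hβ
  intro α hα hαβ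
  obtain ⟨hαP, hsα⟩ := hα
  have hαΦ : α ∈ Φ := hP.subset hαP
  have hβ0 : β ≠ 0 := hΦ.ne_zero β hβΦ
  have hα0 : α ≠ 0 := hΦ.ne_zero α hαΦ
  have inner_pos : ∀ x : E, x ≠ 0 → (0:ℝ) < ⟪x, x⟫ := fun x hx => by
    have h := real_inner_self_eq_norm_mul_norm x
    have : (0:ℝ) < ‖x‖ := norm_pos_iff.mpr hx
    nlinarith
  have inner_nonpos : ∀ x : E, ⟪x, x⟫ ≤ 0 → x = 0 := fun x hx => by
    by_contra h
    exact absurd hx (not_le.mpr (inner_pos x h))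
  have hββ : (0:ℝ) < ⟪β, β⟫ := inner_pos β hβ0
  obtain ⟨n, hn⟩ := hΦ.crystallographic α hαΦ β hβΦ
  have h2ab : 2 * ⟪α, β⟫ = (n : ℝ) * ⟪β, β⟫ := by
    field_simp at hn; linarith
  -- norm bound
  have hαα : ⟪α, α⟫ ≤ ⟪β, β⟫ := hlong α hαΦ
  have hCS : |⟪α, β⟫| ≤ ‖α‖ * ‖β‖ := abs_real_inner_le_norm α β
  have hnormα : ⟪α, α⟫ = ‖α‖ * ‖α‖ := real_inner_self_eq_norm_mul_norm α
  have hnormβ : ⟪β, β⟫ = ‖β‖ * ‖β‖ := real_inner_self_eq_norm_mul_norm β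
  have hab_le : |⟪α, β⟫| ≤ ⟪β, β⟫ := by
    have h1 : ‖α‖ ≤ ‖β‖ := by nlinarith [norm_nonneg α, norm_nonneg β]
    nlinarith [norm_nonneg α, norm_nonneg β]
  have hn_bound : -2 ≤ n ∧ n ≤ 2 := by
    have h1 : |(n : ℝ)| ≤ 2 := by
      rw [abs_le]
      constructor <;> nlinarith [abs_le.mp hab_le]
    have h2 : |n| ≤ 2 := by exact_mod_cast h1
    exact abs_le.mp h2
  -- the negation of a root is a root
  have hnegroot : ∀ γ ∈ Φ, -γ ∈ Φ := by
    intro γ hγ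
    have hγ0 : γ ≠ 0 := hΦ.ne_zero γ hγ
    have hγγ : ⟪γ, γ⟫ ≠ 0 := (inner_pos γ hγ0).ne'
    have := hΦ.reflection_mem γ hγ γ hγ
    have hc : 2 * ⟪γ, γ⟫ / ⟪γ, γ⟫ = 2 := by field_simp
    rw [hc] at this
    have : γ - (2:ℝ) • γ = -γ := by rw [two_smul]; abel
    rwa [this] at ‹γ - (2:ℝ) • γ ∈ Φ›
  -- rewrite the inversion hypothesis
  have hsα' : (n : ℝ) • β - α ∈ P := by
    have : -(sRefl β α) = (n : ℝ) • β - α := by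
      rw [sRefl, hn]; abel
    rwa [this] at hsα
  obtain ⟨hn1, hn2⟩ := hn_bound
  interval_cases n
  · -- n = -2 : α = -β
    exfalso
    have : ⟪α + β, α + β⟫ ≤ 0 := by
      rw [inner_add_add_self]; push_cast at h2ab
      have hcomm := real_inner_comm β α
      linarith
    have hz : α + β = 0 := inner_nonpos _ this
    have hα_eq : α = -β := eq_neg_of_add_eq_zero_left hz
    exact hP.not_neg_mem β hβP (hα_eq ▸ hαP)
  · -- n = -1 : α + β positive and negative
    exfalso
    have hneg : -(α + β) ∈ P := by
      have : ((-1 : ℤ) : ℝ) • β - α = -(α + β) := by push_cast; rw [neg_one_smul]; abel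
      rwa [this] at hsα'
    have hmem : α + β ∈ Φ := by
      have := hnegroot _ (hP.subset hneg)
      rwa [neg_neg] at this
    exact hP.not_neg_mem _ (hP.add_mem α hαP β hβP hmem) hneg
  · -- n = 0 : s_β α = α
    exfalso
    have : -α ∈ P := by
      have : ((0 : ℤ) : ℝ) • β - α = -α := by push_cast; rw [zero_smul]; abel
      rwa [this] at hsα'
    exact hP.not_neg_mem α hαP this
  · -- n = 1 : the main case
    have hβα : β - α ∈ P := by
      have : ((1 : ℤ) : ℝ) • β - α = β - α := by push_cast; rw [one_smul]
      rwa [this] at hsα'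
    push_cast at h2ab
    refine ⟨⟨hβα, ?_⟩, ?_, ?_⟩
    · have hc : 2 * ⟪β - α, β⟫ / ⟪β, β⟫ = 1 := by
        rw [inner_sub_left]; field_simp; linarith
      have : -(sRefl β (β - α)) = α := by
        rw [sRefl, hc, one_smul]; abel
      rwa [this]
    · intro h
      exact hα0 (sub_eq_self.mp h)
    · intro h
      have h2α : (2 : ℝ) • α ∈ Φ := by
        have : (2 : ℝ) • α = β := by
          rw [two_smul]; exact (sub_eq_iff_eq_add.mp h).symm
        rwa [this]
      rcases hΦ.reduced α hαΦ 2 h2α with h | h <;> norm_num at h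
  · -- n = 2 : α = β
    exfalso
    have : ⟪α - β, α - β⟫ ≤ 0 := by
      rw [inner_sub_sub_self]; push_cast at h2ab
      have hcomm := real_inner_comm β α
      linarith
    have hz : α - β = 0 := inner_nonpos _ this
    exact hαβ (sub_eq_zero.mp hz)
end
end
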